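/- arXiv:2103.11862 — 2 statements merged into one kernel-verified Lean document; each statement's English description precedes it below -/
import Mathlib

section
/- Consider a nonnegative sequence E_{q+1} = θ_a E_q if step q is attacked and E_{q+1} = θ E_q otherwise, where θ_a ≥ 1 > θ > 0. If over every interval [0,q) the number of attacked steps is at most κ_d + q/ν_d with θ_a^{1/ν_d} θ^{1 - 1/ν_d} < 1, then there exist Ω ≥ 1 and γ ∈ (0,1) such that E_q ≤ Ω γ^q E_0 for all q ≥ 0. -/
/-- A nonnegative sequence multiplied by `θ_a ≥ 1` on attacked steps and by `θ < 1`
otherwise decays exponentially, provided the attack duration bound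
`|S ∩ [0,q)| ≤ κ_d + q/ν_d` holds with `θ_a^{1/ν_d} θ^{1-1/ν_d} < 1`. -/
theorem dos_duration_exponential_decay
    (S : Set ℕ) [DecidablePred (· ∈ S)]
    (E : ℕ → ℝ) (θa θ κd νd : ℝ)
    (hE0 : 0 ≤ E 0)
    (hθa : 1 ≤ θa) (hθ : 0 < θ) (hθ1 : θ < 1)
    (hκd : 0 ≤ κd) (hνd : 1 ≤ νd)
    (hrec : ∀ q : ℕ, E (q + 1) = if q ∈ S then θa * E q else θ * E q)
    (hdur : ∀ q : ℕ, (((Finset.range q).filter (· ∈ S)).card : ℝ) ≤ κd + q / νd)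
    (hcontr : θa ^ (1 / νd) * θ ^ (1 - 1 / νd) < 1) :
    ∃ Ω : ℝ, 1 ≤ Ω ∧ ∃ γ : ℝ, 0 < γ ∧ γ < 1 ∧
      ∀ q : ℕ, E q ≤ Ω * γ ^ q * E 0 := by
  set r : ℝ := θa / θ with hrdef
  have hθa0 : (0:ℝ) < θa := lt_of_lt_of_le one_pos hθa
  have hr0 : (0:ℝ) < r := div_pos hθa0 hθ
  have hr1 : (1:ℝ) ≤ r := by
    rw [hrdef, le_div_iff₀ hθ]
    nlinarith
  set a : ℕ → ℕ := fun q => ((Finset.range q).filter (· ∈ S)).card with hadef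
  have hrθ : r * θ = θa := by rw [hrdef, div_mul_cancel₀ θa hθ.ne']
  -- closed form
  have hclosed : ∀ q : ℕ, E q = r ^ (a q) * θ ^ q * E 0 := by
    intro q
    induction q with
    | zero => simp [hadef]
    | succ n ih =>
      have ha : a (n + 1) = a n + (if n ∈ S then 1 else 0) := by
        simp only [hadef, Finset.range_add_one, Finset.filter_insert]
        split
        · rw [Finset.card_insert_of_notMem (by simp)]
        · simp
      rw [hrec n, ih, ha]
      by_cases h : n ∈ S <;> simp only [h, if_true, if_false]
      · rw [pow_succ, pow_succ, ← hrθ]; ring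
      · ring
  set γ : ℝ := r ^ (1 / νd) * θ with hγdef
  have hγeq : γ = θa ^ (1 / νd) * θ ^ (1 - 1 / νd) := by
    rw [hγdef, hrdef, Real.div_rpow hθa0.le hθ.le,
      Real.rpow_sub hθ, Real.rpow_one]
    field_simp
  have hγ0 : 0 < γ := mul_pos (Real.rpow_pos_of_pos hr0 _) hθ
  have hγ1 : γ < 1 := by rw [hγeq]; exact hcontr
  refine ⟨r ^ κd, Real.one_le_rpow hr1 hκd, γ, hγ0, hγ1, fun q => ?_⟩
  rw [hclosed q]
  have key : r ^ (a q) ≤ r ^ κd * (r ^ (1 / νd)) ^ q := by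
    have h1 : (r:ℝ) ^ (a q) = r ^ ((a q : ℕ) : ℝ) := (Real.rpow_natCast r (a q)).symm
    have h2 : r ^ ((a q : ℕ) : ℝ) ≤ r ^ (κd + q / νd) :=
      Real.rpow_le_rpow_of_exponent_le hr1 (hdur q)
    have h3 : r ^ (κd + (q:ℝ) / νd) = r ^ κd * (r ^ (1 / νd)) ^ q := by
      rw [Real.rpow_add hr0, ← Real.rpow_natCast (r ^ (1 / νd)) q,
        ← Real.rpow_mul hr0.le]
      ring_nf
    rw [h1]
    calc r ^ ((a q : ℕ) : ℝ) ≤ r ^ (κd + (q:ℝ) / νd) := h2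
      _ = _ := h3
  calc r ^ (a q) * θ ^ q * E 0 ≤ (r ^ κd * (r ^ (1 / νd)) ^ q) * θ ^ q * E 0 := by
        apply mul_le_mul_of_nonneg_right (mul_le_mul_of_nonneg_right key (by positivity)) hE0
    _ = r ^ κd * γ ^ q * E 0 := by rw [hγdef, mul_pow]; ring
end

section
/- Let θ_a ≥ 1, θ_0 > 0, θ_na ∈ (0,1) with θ_0 ≥ θ_na and θ_a > θ_na. Suppose a sequence E_{q+1} = θ_a E_q on Φ_d(q) attacked steps, E_{q+1} = θ_0 E_q on Φ_f(q) first-recovery steps, and E_{q+1} = θ_na E_q otherwise, where Φ_d(q) ≤ κ_d + q/ν_d and Φ_f(q) ≤ κ_f + q/ν_f count attacked and recovery steps in [0,q). If 1/ν_d ≤ log(1/θ_na)/log(θ_a/θ_na) − (log(θ_0/θ_na)/log(θ_a/θ_na))·(1/ν_f) with strict inequality, then there exist Ω ≥ 1, γ ∈ (0,1) such that E_q ≤ Ω γ^q E_0 for all q. -/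
/-- Lemma 2 / condition (29): a sequence multiplied by `θ_a` on attacked steps, `θ_0` on
first-recovery steps, and `θ_na < 1` otherwise decays exponentially under the DoS
frequency and duration bounds and the (strict) condition
`1/ν_d < log(1/θ_na)/log(θ_a/θ_na) − (log(θ_0/θ_na)/log(θ_a/θ_na))·(1/ν_f)`. -/
theorem dos_three_rate_exponential_decay
    (A F : ℕ → Prop) [DecidablePred A] [DecidablePred F]
    (E : ℕ → ℝ) (θa θ0 θna κd κf νd νf : ℝ)
    (hE0 : 0 ≤ E 0)
    (hθa : 1 ≤ θa) (hθ0 : 0 < θ0) (hθna0 : 0 < θna) (hθna1 : θna < 1)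
    (hθ0na : θna ≤ θ0) (hθana : θna < θa)
    (hκd : 0 ≤ κd) (hκf : 0 ≤ κf) (hνd : 1 ≤ νd) (hνf : 2 ≤ νf)
    (hdisj : ∀ q, ¬(A q ∧ F q))
    (hrec : ∀ q : ℕ, E (q + 1) =
      if A q then θa * E q else if F q then θ0 * E q else θna * E q)
    (hdur : ∀ q : ℕ, (((Finset.range q).filter (fun i => A i)).card : ℝ) ≤ κd + q / νd)
    (hfre : ∀ q : ℕ, (((Finset.range q).filter (fun i => F i)).card : ℝ) ≤ κf + q / νf)
    (hcond : 1 / νd < Real.log (1 / θna) / Real.log (θa / θna)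
        - Real.log (θ0 / θna) / Real.log (θa / θna) * (1 / νf)) :
    ∃ Ω : ℝ, 1 ≤ Ω ∧ ∃ γ : ℝ, 0 < γ ∧ γ < 1 ∧
      ∀ q : ℕ, E q ≤ Ω * γ ^ q * E 0 := by
  have hθa0 : (0:ℝ) < θa := hθna0.trans hθana
  set x := θa / θna with hxdef
  set y := θ0 / θna with hydef
  have hx1 : 1 < x := (one_lt_div hθna0).2 hθana
  have hy1 : 1 ≤ y := (one_le_div hθna0).2 hθ0na
  have hx0 : (0:ℝ) < x := one_pos.trans hx1
  have hy0 : (0:ℝ) < y := one_pos.trans_le hy1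
  have hνd0 : (0:ℝ) < νd := one_pos.trans_le hνd
  have hνf0 : (0:ℝ) < νf := by linarith
  have hL : 0 < Real.log x := Real.log_pos hx1
  set na : ℕ → ℕ := fun q => ((Finset.range q).filter (fun i => A i)).card with hna
  set nf : ℕ → ℕ := fun q => ((Finset.range q).filter (fun i => F i)).card with hnf
  have hle : ∀ q, na q + nf q ≤ q := by
    intro q
    have hdis : Disjoint ((Finset.range q).filter (fun i => A i))
        ((Finset.range q).filter (fun i => F i)) := by
      rw [Finset.disjoint_left]
      intro a ha hb
      exact hdisj a ⟨(Finset.mem_filter.1 ha).2, (Finset.mem_filter.1 hb).2⟩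
    calc na q + nf q
        = (((Finset.range q).filter (fun i => A i)) ∪
            ((Finset.range q).filter (fun i => F i))).card :=
          (Finset.card_union_of_disjoint hdis).symm
      _ ≤ (Finset.range q).card := Finset.card_le_card (by
          apply Finset.union_subset <;> exact Finset.filter_subset _ _)
      _ = q := Finset.card_range q
  have hEq : ∀ q, E q = θa ^ (na q) * θ0 ^ (nf q) * θna ^ (q - na q - nf q) * E 0 := by
    intro q
    induction q with
    | zero => simp [hna, hnf]
    | succ q ih =>
      have hq : q ∉ Finset.range q := Finset.notMem_range_self
      have hna' : na (q+1) = na q + (if A q then 1 else 0) := by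
        simp only [hna, Finset.range_add_one, Finset.filter_insert]
        split
        · rw [Finset.card_insert_of_notMem (fun h => hq (Finset.filter_subset _ _ h))]
        · simp
      have hnf' : nf (q+1) = nf q + (if F q then 1 else 0) := by
        simp only [hnf, Finset.range_add_one, Finset.filter_insert]
        split
        · rw [Finset.card_insert_of_notMem (fun h => hq (Finset.filter_subset _ _ h))]
        · simp
      have hsum := hle q
      rw [hrec q, ih, hna', hnf']
      by_cases hA : A q
      · have hF : ¬ F q := fun h => hdisj q ⟨hA, h⟩
        simp only [if_pos hA, if_neg hF]
        rw [show q + 1 - (na q + 1) - (nf q + 0) = q - na q - nf q from by omega]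
        ring
      · by_cases hF : F q
        · simp only [if_neg hA, if_pos hF]
          rw [show q + 1 - (na q + 0) - (nf q + 1) = q - na q - nf q from by omega]
          ring
        · simp only [if_neg hA, if_neg hF]
          rw [show q + 1 - (na q + 0) - (nf q + 0) = (q - na q - nf q) + 1 from by omega,
            pow_succ]
          ring
  have hEq2 : ∀ q, E q = θna ^ q * x ^ (na q) * y ^ (nf q) * E 0 := by
    intro q
    rw [hEq q]
    have hxa : θa = x * θna := by rw [hxdef, div_mul_cancel₀ _ hθna0.ne']
    have hya : θ0 = y * θna := by rw [hydef, div_mul_cancel₀ _ hθna0.ne']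
    have hq : na q + nf q + (q - na q - nf q) = q := by have := hle q; omega
    calc θa ^ (na q) * θ0 ^ (nf q) * θna ^ (q - na q - nf q) * E 0
        = x ^ (na q) * y ^ (nf q) *
            (θna ^ (na q) * θna ^ (nf q) * θna ^ (q - na q - nf q)) * E 0 := by
          rw [hxa, hya, mul_pow, mul_pow]; ring
      _ = θna ^ q * x ^ (na q) * y ^ (nf q) * E 0 := by
          rw [← pow_add, ← pow_add, hq]; ring
  refine ⟨x ^ κd * y ^ κf, ?_, θna * x ^ (1/νd) * y ^ (1/νf), ?_, ?_, ?_⟩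
  · have h1 : (1:ℝ) ≤ x ^ κd := by
      calc (1:ℝ) = x ^ (0:ℝ) := (Real.rpow_zero x).symm
        _ ≤ x ^ κd := Real.rpow_le_rpow_of_exponent_le hx1.le hκd
    have h2 : (1:ℝ) ≤ y ^ κf := by
      calc (1:ℝ) = y ^ (0:ℝ) := (Real.rpow_zero y).symm
        _ ≤ y ^ κf := Real.rpow_le_rpow_of_exponent_le hy1 hκf
    nlinarith
  · positivity
  · -- γ < 1
    have hγ0 : (0:ℝ) < θna * x ^ (1/νd) * y ^ (1/νf) := by positivity
    refine (Real.log_neg_iff hγ0).1 ?_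
    rw [Real.log_mul (by positivity) (by positivity),
        Real.log_mul (by positivity) (by positivity),
        Real.log_rpow hx0, Real.log_rpow hy0]
    have hrw : Real.log (1/θna) / Real.log x - Real.log y / Real.log x * (1/νf)
        = (Real.log (1/θna) - Real.log y * (1/νf)) / Real.log x := by ring
    rw [hrw] at hcond
    have h2 := (lt_div_iff₀ hL).1 hcond
    rw [one_div θna, Real.log_inv] at h2
    nlinarith
  · intro q
    rw [hEq2 q]
    have hb1 : x ^ (na q) ≤ x ^ (κd + q / νd) := by
      rw [← Real.rpow_natCast x (na q)]
      exact Real.rpow_le_rpow_of_exponent_le hx1.le (hdur q)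
    have hb2 : y ^ (nf q) ≤ y ^ (κf + q / νf) := by
      rw [← Real.rpow_natCast y (nf q)]
      exact Real.rpow_le_rpow_of_exponent_le hy1 (hfre q)
    have hstep : θna ^ q * x ^ (na q) * y ^ (nf q) * E 0
        ≤ θna ^ q * x ^ (κd + q / νd) * y ^ (κf + q / νf) * E 0 := by
      have h1 : (0:ℝ) ≤ θna ^ q := by positivity
      have h2 : (0:ℝ) ≤ x ^ (na q) := by positivity
      have h3 : (0:ℝ) ≤ y ^ (κf + q / νf) := by positivity
      have h4 : (0:ℝ) ≤ θna ^ q * x ^ (κd + q / νd) := by positivity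
      exact mul_le_mul_of_nonneg_right
        (mul_le_mul (mul_le_mul_of_nonneg_left hb1 h1) hb2 (by positivity) (by positivity)) hE0
    refine hstep.trans (le_of_eq ?_)
    have hxq : x ^ (κd + q / νd) = x ^ κd * (x ^ (1/νd)) ^ q := by
      rw [Real.rpow_add hx0]
      congr 1
      rw [← Real.rpow_natCast (x ^ (1/νd)) q, ← Real.rpow_mul hx0.le]
      congr 1
      field_simp
    have hyq : y ^ (κf + q / νf) = y ^ κf * (y ^ (1/νf)) ^ q := by
      rw [Real.rpow_add hy0]
      congr 1
      rw [← Real.rpow_natCast (y ^ (1/νf)) q, ← Real.rpow_mul hy0.le]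
      congr 1
      field_simp
    rw [hxq, hyq, mul_pow, mul_pow]
    ring
end
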